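/- Let E and X be real Banach lattices, let F be a closed vector sublattice of E, let i : X → F be a Banach lattice isomorphism (a bijective bounded linear lattice homomorphism with bounded inverse), and let P : E → E be a positive bounded linear projection (P² = P) with range F. If T : X → X is a positive, power-bounded, mean ergodic bounded linear operator which is not weakly almost periodic, then the operator S := i ∘ T ∘ i⁻¹ ∘ P : E → E is positive, power-bounded, mean ergodic, and not weakly almost periodic. -/

import Mathlib

/-!
Write `Q := i⁻¹ ∘ P : E → X`, a bounded operator (because `i` is bounded below) with `Q ∘ i = id`
(because `P` is the identity on its range `F = range i`). Then `S = i ∘ T ∘ Q`, so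
`S ^ (n + 1) = i ∘ T ^ (n + 1) ∘ Q` and `S ^ n ∘ i = i ∘ T ^ n`. The first identity transfers power
boundedness and mean ergodicity from `T` to `S`; the second exhibits every orbit of `T` as the image
of an orbit of `S` under the weakly continuous map `Q`, so weak almost periodicity would pass from
`S` back to `T`. Finally `Q` is positive because `i` is an order embedding and `i ∘ Q = P`.
-/

open Filter Topology Function Set

section Order

variable {α β : Type*} [SemilatticeSup α] [SemilatticeSup β] {f : α → β}

theorem le_of_map_le_of_map_sup (hf : Injective f) (hsup : ∀ x y, f (x ⊔ y) = f x ⊔ f y)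
    {x y : α} (h : f x ≤ f y) : x ≤ y :=
  sup_eq_right.mp <| hf <| by rw [hsup, sup_eq_right.mpr h]

end Order

namespace ContinuousLinearMap

variable {𝕜 E X : Type*} [RCLike 𝕜] [NormedAddCommGroup E] [NormedSpace 𝕜 E]
  [NormedAddCommGroup X] [NormedSpace 𝕜 X]

def IsPowerBounded (T : E →L[𝕜] E) : Prop :=
  ∃ M : ℝ, ∀ n : ℕ, ‖T ^ n‖ ≤ M

def IsMeanErgodic (T : E →L[𝕜] E) : Prop :=
  ∀ x : E, ∃ z : E,
    Tendsto (fun n : ℕ => (n : 𝕜)⁻¹ • ∑ k ∈ Finset.range n, (T ^ k) x) atTop (𝓝 z)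

def IsWeaklyAlmostPeriodic (T : E →L[𝕜] E) : Prop :=
  ∀ x : E, IsCompact (closure (range fun n : ℕ => toWeakSpace 𝕜 E ((T ^ n) x)))

theorem exists_comp_eq_of_range_subset {G : Type*} [NormedAddCommGroup G] [NormedSpace 𝕜 G]
    {i : X →L[𝕜] E} {K : NNReal} (hi : AntilipschitzWith K i)
    {P : G →L[𝕜] E} (hP : range P ⊆ range i) : ∃ Q : G →L[𝕜] X, i ∘L Q = P := by
  choose q hq using fun y => hP ⟨y, rfl⟩
  let Q : G →ₗ[𝕜] X :=
    { toFun := q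
      map_add' := fun y z => hi.injective <| by simp only [map_add, hq]
      map_smul' := fun a y => hi.injective <| by simp only [map_smul, hq, RingHom.id_apply] }
  refine ⟨Q.mkContinuous (K * ‖P‖) fun y => ?_, ext hq⟩
  calc ‖q y‖ ≤ K * ‖i (q y)‖ := hi.le_mul_norm (map_zero i) _
    _ ≤ K * ‖P‖ * ‖y‖ := by rw [hq, mul_assoc]; gcongr; exact P.le_opNorm y

theorem leftInverse_of_comp_eq_idempotent {i : X →L[𝕜] E} (hi : Injective i) {P : E →L[𝕜] E}
    {Q : E →L[𝕜] X} (hiQ : i ∘L Q = P) (hP : P ∘L P = P) (hrange : range i ⊆ range P) :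
    LeftInverse Q i := by
  intro x
  obtain ⟨y, hy⟩ := hrange ⟨x, rfl⟩
  apply hi
  rw [← comp_apply i Q, hiQ, ← hy, ← comp_apply, hP]

section Conjugation

variable {i : X →L[𝕜] E} {Q : E →L[𝕜] X} {T : X →L[𝕜] X}

theorem conj_pow_succ (hQi : LeftInverse Q i) (n : ℕ) :
    (i ∘L T ∘L Q) ^ (n + 1) = i ∘L (T ^ (n + 1)) ∘L Q := by
  induction n with
  | zero => simp
  | succ n ih =>
    ext y
    rw [pow_succ, mul_apply_eq_comp, ih]
    simp [hQi (T (Q y)), pow_succ _ (n + 1)]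

theorem conj_pow_comp (hQi : LeftInverse Q i) (n : ℕ) :
    ((i ∘L T ∘L Q) ^ n) ∘L i = i ∘L (T ^ n) := by
  ext x
  cases n with
  | zero => simp
  | succ n =>
    simp [conj_pow_succ hQi, hQi x]

theorem IsPowerBounded.conj (hQi : LeftInverse Q i) (hT : IsPowerBounded T) :
    IsPowerBounded (i ∘L T ∘L Q) := by
  obtain ⟨M, hM⟩ := hT
  refine ⟨max 1 (‖i‖ * M * ‖Q‖), fun n => ?_⟩
  cases n with
  | zero => exact norm_id_le.trans (le_max_left _ _)
  | succ n =>
    rw [conj_pow_succ hQi]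
    calc ‖i ∘L (T ^ (n + 1)) ∘L Q‖ ≤ ‖i‖ * (‖T ^ (n + 1)‖ * ‖Q‖) :=
          (opNorm_comp_le _ _).trans (by gcongr; exact opNorm_comp_le _ _)
      _ ≤ ‖i‖ * (M * ‖Q‖) := by gcongr; exact hM _
      _ ≤ max 1 (‖i‖ * M * ‖Q‖) := by rw [← mul_assoc]; exact le_max_right _ _

theorem sum_range_succ_conj_pow_apply (hQi : LeftInverse Q i) (n : ℕ) (y : E) :
    ∑ k ∈ Finset.range (n + 1), ((i ∘L T ∘L Q) ^ k) y =
      (y - i (Q y)) + i (∑ k ∈ Finset.range (n + 1), (T ^ k) (Q y)) := by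
  rw [Finset.sum_range_succ', Finset.sum_range_succ', map_add, map_sum]
  simp only [conj_pow_succ hQi, comp_apply, pow_zero, one_def, id_apply]
  abel

theorem IsMeanErgodic.conj (hQi : LeftInverse Q i) (hT : IsMeanErgodic T) :
    IsMeanErgodic (i ∘L T ∘L Q) := by
  intro y
  obtain ⟨z, hz⟩ := hT (Q y)
  refine ⟨i z, (tendsto_add_atTop_iff_nat 1).mp ?_⟩
  have hdefect : Tendsto (fun n : ℕ => ((n + 1 : ℕ) : 𝕜)⁻¹ • (y - i (Q y))) atTop (𝓝 0) := by
    simpa using ((tendsto_inv_atTop_nhds_zero_nat (𝕜 := 𝕜)).comp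
      (tendsto_add_atTop_nat 1)).smul_const (y - i (Q y))
  have hmeans := (i.continuous.tendsto z).comp ((tendsto_add_atTop_iff_nat 1).mpr hz)
  refine (zero_add (i z) ▸ hdefect.add hmeans).congr fun n => ?_
  rw [sum_range_succ_conj_pow_apply hQi, smul_add, Function.comp_apply, map_smul]

theorem IsWeaklyAlmostPeriodic.of_conj (hQi : LeftInverse Q i)
    (hS : IsWeaklyAlmostPeriodic (i ∘L T ∘L Q)) : IsWeaklyAlmostPeriodic T := by
  intro x
  refine ((hS (i x)).image (WeakSpace.map Q).continuous).closure_of_subset ?_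
  rintro _ ⟨n, rfl⟩
  refine ⟨_, subset_closure ⟨n, rfl⟩, ?_⟩
  change toWeakSpace 𝕜 X (Q (((i ∘L T ∘L Q) ^ n) (i x))) = _
  rw [← comp_apply _ i, conj_pow_comp hQi, comp_apply, hQi]

end Conjugation

end ContinuousLinearMap

section Positivity

variable {E X : Type*} [NormedAddCommGroup E] [Lattice E] [NormedSpace ℝ E]
  [NormedAddCommGroup X] [Lattice X] [NormedSpace ℝ X]

theorem ContinuousLinearMap.conj_nonneg {i : X →L[ℝ] E} (hi : Injective i)
    (hsup : ∀ x y, i (x ⊔ y) = i x ⊔ i y) {Q : E →L[ℝ] X} (hQ : ∀ y, 0 ≤ y → 0 ≤ i (Q y))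
    {T : X →L[ℝ] X} (hT : ∀ x, 0 ≤ x → 0 ≤ T x) {y : E} (hy : 0 ≤ y) :
    0 ≤ (i ∘L T ∘L Q) y := by
  have hQy : 0 ≤ Q y := le_of_map_le_of_map_sup hi hsup <| by rw [map_zero]; exact hQ y hy
  simpa using Monotone.of_map_sup hsup (hT _ hQy)

end Positivity

theorem transfer_counterexample_along_lattice_isomorphism
    (E X : Type*)
    [NormedAddCommGroup E] [Lattice E]
    [NormedSpace ℝ E]
    [NormedAddCommGroup X] [Lattice X]
    [NormedSpace ℝ X]
    (F : Set E)
    (i : X →L[ℝ] E)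
    (hi_range : Set.range i = F)
    (hi_inv : ∃ c : ℝ, 0 < c ∧ ∀ x : X, c * ‖x‖ ≤ ‖i x‖)
    (hi_lat : ∀ x y : X, i (x ⊔ y) = i x ⊔ i y)
    (P : E →L[ℝ] E)
    (hP_pos : ∀ y : E, 0 ≤ y → 0 ≤ P y)
    (hP_proj : P.comp P = P)
    (hP_range : Set.range P = F)
    (T : X →L[ℝ] X)
    (hT_pos : ∀ x : X, 0 ≤ x → 0 ≤ T x)
    (hT_pb : ∃ M : ℝ, ∀ n : ℕ, ‖T ^ n‖ ≤ M)
    (hT_me : ∀ x : X, ∃ z : X,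
      Tendsto (fun n : ℕ => (n : ℝ)⁻¹ • ∑ k ∈ Finset.range n, (T ^ k) x) atTop (nhds z))
    (hT_nwap : ¬ ∀ x : X,
      IsCompact (closure (Set.range fun n : ℕ => toWeakSpace ℝ X ((T ^ n) x))))
    (S : E →L[ℝ] E)
    (hS : ∀ (y : E) (x : X), i x = P y → S y = i (T x)) :
    (∀ y : E, 0 ≤ y → 0 ≤ S y) ∧
    (∃ M : ℝ, ∀ n : ℕ, ‖S ^ n‖ ≤ M) ∧
    (∀ y : E, ∃ z : E,
      Tendsto (fun n : ℕ => (n : ℝ)⁻¹ • ∑ k ∈ Finset.range n, (S ^ k) y) atTop (nhds z)) ∧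
    ¬ ∀ y : E,
      IsCompact (closure (Set.range fun n : ℕ => toWeakSpace ℝ E ((S ^ n) y))) := by
  obtain ⟨K, hK⟩ := antilipschitzWith_iff_exists_mul_le_norm.mpr hi_inv
  have hrange : range P = range i := hP_range.trans hi_range.symm
  obtain ⟨Q, hiQ⟩ := ContinuousLinearMap.exists_comp_eq_of_range_subset hK hrange.subset
  have hQi := ContinuousLinearMap.leftInverse_of_comp_eq_idempotent hK.injective hiQ hP_proj
    hrange.superset
  obtain rfl : S = i ∘L T ∘L Q := ContinuousLinearMap.ext fun y => hS y (Q y) congr($hiQ y)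
  have hiQ_nonneg (y : E) (hy : 0 ≤ y) : 0 ≤ i (Q y) := congr($hiQ y) ▸ hP_pos y hy
  exact ⟨fun y => ContinuousLinearMap.conj_nonneg hK.injective hi_lat hiQ_nonneg hT_pos,
    ContinuousLinearMap.IsPowerBounded.conj hQi hT_pb,
    ContinuousLinearMap.IsMeanErgodic.conj hQi hT_me,
    fun hS => hT_nwap (ContinuousLinearMap.IsWeaklyAlmostPeriodic.of_conj hQi hS)⟩
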